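/- arXiv:1905.00686 — 4 statements merged into one kernel-verified Lean document; each statement's English description precedes it below -/
import Mathlib

section
/- For partial Bell polynomials, B_{n+k,k}(0, -2!·a_1, -3!·a_2, ..., -(n+1)!·a_n) = ((n+k)!/n!) · B_{n,k}(-1!·a_1, -2!·a_2, ..., -n!·a_n) for all natural numbers n ≥ 0 and k ≥ 1. -/
open Finset

/-- Partial Bell polynomials `B n k`, defined by the standard recurrence
`B_{n,k} = ∑_{i=1}^{n-k+1} C(n-1, i-1) * x_i * B_{n-i, k-1}`, equivalently by the
exponential generating function `∑ B_{n,k} u^k t^n/n! = exp (u * ∑_{j ≥ 1} x_j t^j/j!)`. -/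
def bellPoly {R : Type*} [CommRing R] (x : ℕ → R) : ℕ → ℕ → R
  | 0, 0 => 1
  | 0, _+1 => 0
  | _+1, 0 => 0
  | n+1, k+1 => ∑ i ∈ Finset.range (n+1), (n.choose i : R) * x (i+1) * bellPoly x (n - i) k

theorem bellPoly_succ {R : Type*} [CommRing R] (x : ℕ → R) (n k : ℕ) :
    bellPoly x (n+1) (k+1)
      = ∑ i ∈ Finset.range (n+1), (n.choose i : R) * x (i+1) * bellPoly x (n - i) k := by
  rw [bellPoly]

theorem bellPoly_zero_of_lt {R : Type*} [CommRing R] (x : ℕ → R) :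
    ∀ n k, n < k → bellPoly x n k = 0
  | 0, k+1, _ => rfl
  | n+1, k+1, h => by
    rw [bellPoly_succ]
    refine Finset.sum_eq_zero fun i hi => ?_
    rw [bellPoly_zero_of_lt x (n - i) k (by omega)]
    ring

-- choose mul choose identity
theorem my_choose_mul_choose (n a b : ℕ) :
    n.choose a * (n - a).choose b = n.choose b * (n - b).choose a := by
  by_cases h : a + b ≤ n
  · have h1 := Nat.choose_mul_factorial_mul_factorial (show a ≤ n by omega)
    have h2 := Nat.choose_mul_factorial_mul_factorial (show b ≤ n - a by omega)
    have h3 := Nat.choose_mul_factorial_mul_factorial (show b ≤ n by omega)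
    have h4 := Nat.choose_mul_factorial_mul_factorial (show a ≤ n - b by omega)
    have e1 : n - a - b = n - b - a := by omega
    have hpos : 0 < a.factorial * b.factorial * (n - a - b).factorial :=
      Nat.mul_pos (Nat.mul_pos a.factorial_pos b.factorial_pos) (Nat.factorial_pos _)
    apply Nat.eq_of_mul_eq_mul_right hpos
    rw [e1] at h2 ⊢
    zify at h1 h2 h3 h4 ⊢
    linear_combination ((n.choose a : ℤ) * a.factorial) * h2 + h1
      - ((n.choose b : ℤ) * b.factorial) * h4 - h3
  · rcases le_or_gt a n with ha | ha
    · rcases le_or_gt b n with hb | hb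
      · rw [Nat.choose_eq_zero_of_lt (show n - a < b by omega),
          Nat.choose_eq_zero_of_lt (show n - b < a by omega)]
        ring
      · rw [Nat.choose_eq_zero_of_lt (show n - a < b by omega),
          Nat.choose_eq_zero_of_lt hb]
        ring
    · rw [Nat.choose_eq_zero_of_lt ha, Nat.choose_eq_zero_of_lt (show n - b < a by omega)]
      ring

theorem bellPoly_zero_succ {R : Type*} [CommRing R] (x : ℕ → R) (k : ℕ) :
    bellPoly x 0 (k+1) = 0 := rfl

theorem bellPoly_succ_zero {R : Type*} [CommRing R] (x : ℕ → R) (n : ℕ) :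
    bellPoly x (n+1) 0 = 0 := rfl

theorem bellPoly_mul_succ {R : Type*} [CommRing R] (x : ℕ → R) :
    ∀ n k, ∑ i ∈ Finset.range n, (n.choose (i+1) : R) * x (i+1) * bellPoly x (n-1-i) k
      = ((k : R)+1) * bellPoly x n (k+1)
  | 0, k => by simp [bellPoly_zero_succ]
  | m+1, k => by
    simp only [Nat.add_sub_cancel]
    have key : ∑ i ∈ Finset.range (m+1), (m.choose (i+1) : R) * x (i+1) * bellPoly x (m-i) k
        = (k : R) * bellPoly x (m+1) (k+1) := by
      rcases k with _ | l
      · rw [Nat.cast_zero, zero_mul]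
        refine Finset.sum_eq_zero fun i hi => ?_
        rcases Nat.lt_succ_iff_lt_or_eq.mp (Finset.mem_range.mp hi) with h | rfl
        · obtain ⟨p, hp⟩ : ∃ p, m - i = p + 1 := ⟨m - i - 1, by omega⟩
          rw [hp, bellPoly_succ_zero]; ring
        · rw [Nat.choose_succ_self, Nat.cast_zero]; ring
      · -- k = l+1
        have hL : ∀ i ∈ Finset.range (m+1),
            (m.choose (i+1) : R) * x (i+1) * bellPoly x (m-i) (l+1)
            = ∑ j ∈ Finset.range (m+1), (m.choose (i+1) : R) * ((m-1-i).choose j : R)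
                * (x (i+1) * x (j+1) * bellPoly x (m-1-i-j) l) := by
          intro i hi
          rcases Nat.lt_succ_iff_lt_or_eq.mp (Finset.mem_range.mp hi) with h | rfl
          · have hmi : m - i = (m-1-i) + 1 := by omega
            rw [hmi, bellPoly_succ, Finset.mul_sum]
            rw [show Finset.range (m-1-i+1) = Finset.range (m-i) from by rw [← hmi]]
            rw [← Finset.sum_subset (Finset.range_subset_range.mpr (show m-i ≤ m+1 by omega))
              (fun j _ hj => by
                rw [Nat.choose_eq_zero_of_lt (show m-1-i < j by
                  simp only [Finset.mem_range, not_lt] at hj; omega), Nat.cast_zero]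
                ring)]
            exact Finset.sum_congr rfl fun j _ => by ring
          · rw [Nat.choose_succ_self]
            simp
        rw [Finset.sum_congr rfl hL]
        have hR : ∀ i ∈ Finset.range (m+1),
            (m.choose i : R) * x (i+1) * (((l:R)+1) * bellPoly x (m-i) (l+1))
            = ∑ j ∈ Finset.range (m+1), (m.choose i : R) * ((m-i).choose (j+1) : R)
                * (x (i+1) * x (j+1) * bellPoly x (m-1-i-j) l) := by
          intro i hi
          rw [← bellPoly_mul_succ x (m-i) l, Finset.mul_sum]
          rw [← Finset.sum_subset (Finset.range_subset_range.mpr (show m-i ≤ m+1 by omega))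
            (fun j _ hj => by
              rw [Nat.choose_eq_zero_of_lt (show m-i < j+1 by
                simp only [Finset.mem_range, not_lt] at hj; omega), Nat.cast_zero]
              ring)]
          refine Finset.sum_congr rfl fun j _ => ?_
          rw [show m - i - 1 - j = m - 1 - i - j from by omega]
          ring
        have hRsum : ((l:R)+1) * bellPoly x (m+1) (l+1+1)
            = ∑ i ∈ Finset.range (m+1), ∑ j ∈ Finset.range (m+1),
                (m.choose i : R) * ((m-i).choose (j+1) : R)
                  * (x (i+1) * x (j+1) * bellPoly x (m-1-i-j) l) := by
          rw [bellPoly_succ, Finset.mul_sum]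
          refine Finset.sum_congr rfl fun i hi => ?_
          rw [← hR i hi]; ring
        push_cast
        rw [hRsum, Finset.sum_comm]
        refine Finset.sum_congr rfl fun i _ => Finset.sum_congr rfl fun j _ => ?_
        have hc := my_choose_mul_choose m i (j+1)
        rw [show m - (j+1) = m - 1 - j from by omega] at hc
        rw [show m - 1 - j - i = m - 1 - i - j from by omega]
        have : ((m.choose (j+1) : ℕ) : R) * ((m-1-j).choose i : R)
            = (m.choose i : R) * ((m-i).choose (j+1) : R) := by
          rw [← Nat.cast_mul, ← Nat.cast_mul, ← hc]
        linear_combination (x (j+1) * x (i+1) * bellPoly x (m-1-i-j) l) * this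
    calc ∑ i ∈ Finset.range (m+1), ((m+1).choose (i+1) : R) * x (i+1) * bellPoly x (m-i) k
        = ∑ i ∈ Finset.range (m+1), ((m.choose i : R) * x (i+1) * bellPoly x (m-i) k
            + (m.choose (i+1) : R) * x (i+1) * bellPoly x (m-i) k) := by
          refine Finset.sum_congr rfl fun i _ => ?_
          rw [Nat.choose_succ_succ]; push_cast; ring
      _ = bellPoly x (m+1) (k+1) + (k:R) * bellPoly x (m+1) (k+1) := by
          rw [Finset.sum_add_distrib, key, bellPoly_succ]
      _ = ((k:R)+1) * bellPoly x (m+1) (k+1) := by ring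

theorem coeff_identity (m k j : ℕ) (hj : j ≤ m) :
    (m+k+1).choose (j+1) * (j+2) * (m-j+k).descFactorial k
      = (m+k+1).descFactorial (k+1) * m.choose j
        + (m+k+1).descFactorial k * ((m+1).choose (j+1)) := by
  have hpos : 0 < (j+1).factorial * (m-j).factorial :=
    Nat.mul_pos (Nat.factorial_pos _) (Nat.factorial_pos _)
  apply Nat.eq_of_mul_eq_mul_right hpos
  have h1 := Nat.choose_mul_factorial_mul_factorial (show j+1 ≤ m+k+1 by omega)
  rw [show m+k+1 - (j+1) = m-j+k from by omega] at h1
  have h2 := Nat.factorial_mul_descFactorial (show k ≤ m-j+k by omega)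
  rw [show m-j+k - k = m-j from by omega] at h2
  have h3 := Nat.choose_mul_factorial_mul_factorial hj
  have h4 := Nat.factorial_mul_descFactorial (show k+1 ≤ m+k+1 by omega)
  rw [show m+k+1 - (k+1) = m from by omega] at h4
  have h5 := Nat.factorial_mul_descFactorial (show k ≤ m+k+1 by omega)
  rw [show m+k+1 - k = m+1 from by omega] at h5
  have h6 := Nat.choose_mul_factorial_mul_factorial (show j+1 ≤ m+1 by omega)
  rw [show m+1 - (j+1) = m-j from by omega] at h6
  have hf : (j+1).factorial = (j+1) * j.factorial := Nat.factorial_succ j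
  zify at h1 h2 h3 h4 h5 h6 hf ⊢
  linear_combination (((m+k+1).choose (j+1) : ℤ) * (j+2) * (j+1).factorial) * h2
    + ((j:ℤ)+2) * h1
    - (((m+k+1).descFactorial (k+1) : ℤ) * (m.choose j) * (m-j).factorial) * hf
    - (((m+k+1).descFactorial (k+1) : ℤ) * ((j:ℤ)+1)) * h3
    - ((j:ℤ)+1) * h4
    - ((m+k+1).descFactorial k : ℤ) * h6
    - h5

theorem descFac_add (m k : ℕ) :
    (m+k+1+1).descFactorial (k+1)
      = (m+k+1).descFactorial (k+1) + (k+1) * (m+k+1).descFactorial k := by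
  rw [Nat.succ_descFactorial_succ, Nat.descFactorial_succ,
    show m+k+1-k = m+1 from by omega]
  ring

theorem bell_shift_aux {R : Type*} [CommRing R] (a : ℕ → R) :
    ∀ k n, bellPoly (fun j => if j = 1 then (0:R) else -((j.factorial : R) * a (j - 1))) (n+k) k
      = (((n+k).descFactorial k : ℕ) : R) * bellPoly (fun j => -((j.factorial : R) * a j)) n k
  | 0, n => by cases n <;> simp [bellPoly]
  | k+1, 0 => by
      rw [bellPoly_zero_succ, mul_zero]
      rw [show (0+(k+1) : ℕ) = k+1 from by omega, bellPoly_succ]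
      refine Finset.sum_eq_zero fun i hi => ?_
      rcases i with _ | p
      · simp
      · rw [bellPoly_zero_of_lt _ _ _ (show k-(p+1) < k from by
          have := Finset.mem_range.mp hi; omega)]
        ring
  | k+1, (m+1) => by
      have IH := bell_shift_aux a k
      set X : ℕ → R := fun j => if j = 1 then (0:R) else -((j.factorial : R) * a (j - 1)) with hX
      set Y : ℕ → R := fun j => -((j.factorial : R) * a j) with hY
      have hx1 : X 1 = 0 := by rw [hX]; simp
      have hxy : ∀ i : ℕ, X (i+2) = ((i+2 : ℕ) : R) * Y (i+1) := by
        intro i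
        rw [hX, hY]
        simp only [show i+2 ≠ 1 from by omega, if_false, Nat.add_sub_cancel,
          Nat.factorial_succ (i+1)]
        push_cast
        ring
      rw [show m+1+(k+1) = (m+k+1)+1 from by omega, bellPoly_succ]
      rw [Finset.sum_range_succ']
      rw [hx1]
      simp only [Nat.succ_sub_succ, mul_zero, zero_mul, add_zero, Nat.sub_zero]
      rw [← Finset.sum_subset (Finset.range_subset_range.mpr (show m+1 ≤ m+k+1 by omega))
        (fun i hi hni => by
          rw [bellPoly_zero_of_lt _ _ _ (show m+k-i < k from by
            simp only [Finset.mem_range, not_lt] at hni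
            have := Finset.mem_range.mp hi; omega)]
          ring)]
      have step : ∀ i ∈ Finset.range (m+1),
          ((m+k+1).choose (i+1) : R) * X (i+1+1) * bellPoly X (m+k-i) k
            = ((m+k+1).descFactorial (k+1) : R)
                * ((m.choose i : R) * Y (i+1) * bellPoly Y (m-i) k)
              + ((m+k+1).descFactorial k : R)
                * (((m+1).choose (i+1) : R) * Y (i+1) * bellPoly Y (m-i) k) := by
        intro i hi
        have him : i ≤ m := by have := Finset.mem_range.mp hi; omega
        rw [show m+k-i = (m-i)+k from by omega, IH (m-i), hxy i]
        have hc := coeff_identity m k i him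
        calc ((m+k+1).choose (i+1) : R) * (((i+2:ℕ):R) * Y (i+1))
              * (((((m-i)+k).descFactorial k : ℕ) : R) * bellPoly Y (m-i) k)
            = (((m+k+1).choose (i+1) * (i+2) * ((m-i)+k).descFactorial k : ℕ) : R)
                * (Y (i+1) * bellPoly Y (m-i) k) := by push_cast; ring
          _ = (((m+k+1).descFactorial (k+1) * m.choose i
                + (m+k+1).descFactorial k * ((m+1).choose (i+1)) : ℕ) : R)
                * (Y (i+1) * bellPoly Y (m-i) k) := by
              rw [show (m-i)+k = m-i+k from rfl, hc]
          _ = _ := by push_cast; ring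
      rw [Finset.sum_congr rfl step, Finset.sum_add_distrib, ← Finset.mul_sum, ← Finset.mul_sum]
      have hmul := bellPoly_mul_succ Y (m+1) k
      simp only [Nat.add_sub_cancel] at hmul
      rw [hmul, ← bellPoly_succ, descFac_add]
      push_cast
      ring

/-- for all naturals `n ≥ 0` and `k ≥ 1`,
`B_(n+k),k (0, -2!·a₁, -3!·a₂, …) = ((n+k)!/n!) * B_n,k (-1!·a₁, -2!·a₂, …, -n!·aₙ)`. -/
theorem bell_shift_identity {R : Type*} [CommRing R] (a : ℕ → R) (n k : ℕ) (hk : 1 ≤ k) :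
    bellPoly (fun j => if j = 1 then 0 else -((j.factorial : R) * a (j - 1))) (n + k) k
      = (((n + k).factorial / n.factorial : ℕ) : R)
          * bellPoly (fun j => -((j.factorial : R) * a j)) n k := by
  rw [show ((n + k).factorial / n.factorial : ℕ) = (n+k).descFactorial k from by
    rw [Nat.descFactorial_eq_div (show k ≤ n+k by omega), show n+k-k = n from by omega]]
  exact bell_shift_aux a k n
end

section
/- Let φ(ρ) = ∑_{j≥0} a_j ρ^{j+1} be a formal power series with a_0 = 1 over a ℚ-algebra, and let ρ(φ) = ∑_{n≥1} (b_n/n!) φ^n be its compositional inverse. Then b_{n+1} = ∑_{k=1}^{n} ((n+k)!/n!) · B_{n,k}(-1!·a_1, -2!·a_2, ..., -n!·a_n) for all n ≥ 1, and b_1 = 1. -/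
open Finset PowerSeries

/-- Composition `f ∘ g` of formal power series; this is the correct notion of
composition when `g` has zero constant coefficient (then `coeff n (g ^ k) = 0` for `k > n`). -/
noncomputable def compPS {R : Type*} [CommRing R] (f g : PowerSeries R) : PowerSeries R :=
  PowerSeries.mk fun n =>
    ∑ k ∈ Finset.range (n + 1), (PowerSeries.coeff k f) * (PowerSeries.coeff n (g ^ k))

theorem Nat.add_choose_mul_factorial_eq_factorial_div (n k : ℕ) :
    (n + k).choose n * k.factorial = (n + k).factorial / n.factorial := by
  refine (Nat.div_eq_of_eq_mul_left n.factorial_pos ?_).symm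
  rw [← Nat.add_choose_mul_factorial_mul_factorial, Nat.choose_symm_add]
  ring

section
variable {R : Type*} [CommRing R] {u v : R⟦X⟧}

theorem coeff_pow_mul_eq_zero_of_lt {g : R⟦X⟧} (hg : constantCoeff g = 0) (w : R⟦X⟧)
    {m k : ℕ} (h : m < k) : coeff m (g ^ k * w) = 0 :=
  X_pow_dvd_iff.mp ((pow_dvd_pow_of_dvd (X_dvd_iff.mpr hg) k).mul_right w) m h

theorem coeff_subst_mul {f g : R⟦X⟧} (hg : constantCoeff g = 0) (h : R⟦X⟧) (n : ℕ) :
    coeff n (f.subst g * h) = ∑ m ∈ range (n + 1), coeff m f * coeff n (g ^ m * h) := by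
  have hs := HasSubst.of_constantCoeff_zero' hg
  have hsplit : f.subst g = g ^ (n + 1) * (mk fun i ↦ coeff (i + (n + 1)) f).subst g
      + Polynomial.aeval g (trunc (n + 1) f) := by
    conv_lhs => rw [eq_X_pow_mul_shift_add_trunc (n + 1) f]
    rw [← coe_substAlgHom hs, map_add, map_mul, map_pow, substAlgHom_X, substAlgHom_coe]
  rw [hsplit, add_mul, map_add, mul_assoc, coeff_pow_mul_eq_zero_of_lt hg _ n.lt_succ_self,
    zero_add, Polynomial.aeval_eq_sum_range' (natDegree_trunc_lt f n), sum_mul, map_sum]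
  refine sum_congr rfl fun m hm => ?_
  rw [coeff_trunc, if_pos (mem_range.mp hm), smul_mul_assoc, map_smul, smul_eq_mul]

theorem compPS_eq_subst (f : R⟦X⟧) {g : R⟦X⟧} (hg : constantCoeff g = 0) :
    compPS f g = f.subst g := by
  ext n
  simpa [compPS] using (coeff_subst_mul hg 1 n).symm

theorem inv_pow_eq_subst_invOneSubPow (huv : u * v = 1) (hu : constantCoeff u = 1) (d : ℕ) :
    v ^ d = (invOneSubPow R d).val.subst (1 - u) := by
  have hs : HasSubst (1 - u) := HasSubst.of_constantCoeff_zero' (by simp [hu])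
  have h := congrArg (substAlgHom hs) (invOneSubPow R d).inv_val
  rw [invOneSubPow_inv_eq_one_sub_pow, map_mul, map_pow, map_sub, map_one, substAlgHom_X,
    sub_sub_cancel, coe_substAlgHom] at h
  calc v ^ d = v ^ d * (u ^ d * (invOneSubPow R d).val.subst (1 - u)) := by rw [h, mul_one]
    _ = _ := by rw [← mul_assoc, ← mul_pow, mul_comm v, huv, one_pow, one_mul]

theorem coeff_inv_pow_succ (huv : u * v = 1) (hu : constantCoeff u = 1) (d n : ℕ) :
    coeff n (v ^ (d + 1))
      = ∑ k ∈ range (n + 1), ((d + k).choose d : R) * coeff n ((1 - u) ^ k) := by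
  simpa [inv_pow_eq_subst_invOneSubPow huv hu, invOneSubPow_val_succ_eq_mk_add_choose]
    using coeff_subst_mul (f := (invOneSubPow R (d + 1)).val) (by simp [hu]) 1 n

theorem succ_mul_coeff_succ_pow_succ (F : R⟦X⟧) (n k : ℕ) :
    (n + 1) * coeff (n + 1) (F ^ (k + 1))
      = (k + 1) * ∑ i ∈ range (n + 1), (i + 1) * coeff (i + 1) F * coeff (n - i) (F ^ k) := by
  have h := congrArg (coeff n) (derivative_pow F (k + 1))
  rw [coeff_derivative, Nat.add_sub_cancel, mul_assoc, mul_comm (F ^ k), ← map_natCast C,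
    coeff_C_mul, coeff_mul, Nat.sum_antidiagonal_eq_sum_range_succ_mk] at h
  push_cast at h
  rw [mul_comm, h]
  congr 1
  refine sum_congr rfl fun i _ => ?_
  rw [coeff_derivative]
  ring

theorem factorial_mul_bellPoly {x : ℕ → R} {F : R⟦X⟧} (hF : constantCoeff F = 0)
    (hx : ∀ j, x (j + 1) = (j + 1).factorial * coeff (j + 1) F) (n k : ℕ) :
    k.factorial * bellPoly x n k = n.factorial * coeff n (F ^ k) := by
  induction k generalizing n with
  | zero => cases n <;> simp [bellPoly, coeff_one]
  | succ k ih =>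
    cases n with
    | zero => simp [bellPoly, hF]
    | succ n =>
      calc ((k + 1).factorial : R) * bellPoly x (n + 1) (k + 1)
          = (k + 1) * ∑ i ∈ range (n + 1),
              n.choose i * x (i + 1) * (k.factorial * bellPoly x (n - i) k) := by
            rw [bellPoly, mul_sum, mul_sum, Nat.factorial_succ]
            push_cast
            refine sum_congr rfl fun i _ => by ring
        _ = (k + 1) * ∑ i ∈ range (n + 1),
              n.factorial * ((i + 1) * coeff (i + 1) F * coeff (n - i) (F ^ k)) := by
            refine congrArg _ (sum_congr rfl fun i hi => ?_)
            have hfact : ((n.choose i * i.factorial * (n - i).factorial : ℕ) : R) = n.factorial :=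
              congrArg Nat.cast (Nat.choose_mul_factorial_mul_factorial (mem_range_succ_iff.mp hi))
            rw [hx, ih, Nat.factorial_succ, ← hfact]
            push_cast
            ring
        _ = ((n + 1).factorial : R) * coeff (n + 1) (F ^ (k + 1)) := by
            rw [← mul_sum, mul_left_comm, ← succ_mul_coeff_succ_pow_succ, Nat.factorial_succ]
            push_cast
            ring

theorem derivative_eq_of_mul_eq_one (huv : u * v = 1) : d⁄dX R v = -(v ^ 2 * d⁄dX R u) := by
  have hD : u * d⁄dX R v + v * d⁄dX R u = 0 := by
    simpa [huv, smul_eq_mul] using ((d⁄dX R).leibniz u v).symm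
  linear_combination v * hD - d⁄dX R v * huv

-- `φ^(-k-1) φ' = -(φ^(-k))' / k` for `φ = X * u`, multiplied through by `k X^(k+1)`.
theorem nsmul_inv_pow_mul_derivative_X_mul_add (huv : u * v = 1) (k : ℕ) :
    k • (v ^ (k + 1) * d⁄dX R (X * u)) + X * d⁄dX R (v ^ k) = k • v ^ k := by
  have hXu : d⁄dX R (X * u) = X * d⁄dX R u + u := by
    simp [Derivation.leibniz, smul_eq_mul]
  rcases k with _ | k
  · simp
  · rw [derivative_pow, derivative_eq_of_mul_eq_one huv, hXu, nsmul_eq_mul, nsmul_eq_mul]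
    push_cast
    linear_combination ((k : R⟦X⟧) + 1) * v ^ (k + 1) * huv

theorem coeff_inv_pow_mul_derivative_X_mul [IsAddTorsionFree R] (huv : u * v = 1) (k : ℕ) :
    coeff k (v ^ (k + 1) * d⁄dX R (X * u)) = if k = 0 then 1 else 0 := by
  rcases k with _ | k
  · have h := congrArg constantCoeff huv
    simp only [map_mul, map_one] at h
    simp [mul_comm, h]
  · have h := congrArg (coeff (k + 1)) (nsmul_inv_pow_mul_derivative_X_mul_add huv (k + 1))
    rw [map_add, map_nsmul, map_nsmul, coeff_succ_X_mul, coeff_derivative] at h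
    have h' : (k + 1) • coeff (k + 1) (v ^ (k + 1 + 1) * d⁄dX R (X * u)) = 0 := by
      simp only [nsmul_eq_mul] at h ⊢
      push_cast at h ⊢
      linear_combination h
    exact (smul_eq_zero.mp h').resolve_left k.succ_ne_zero

theorem coeff_X_mul_pow_mul_derivative_mul_inv_pow [IsAddTorsionFree R] (huv : u * v = 1)
    {m n : ℕ} (hmn : m ≤ n) :
    coeff n ((X * u) ^ m * (d⁄dX R (X * u) * v ^ (n + 1))) = if m = n then 1 else 0 := by
  obtain ⟨k, rfl⟩ := Nat.exists_eq_add_of_le hmn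
  have hcancel : (X * u) ^ m * (d⁄dX R (X * u) * v ^ (m + k + 1))
      = X ^ m * (v ^ (k + 1) * d⁄dX R (X * u)) := by
    have huvm : u ^ m * v ^ m = 1 := by rw [← mul_pow, huv, one_pow]
    rw [pow_add, pow_add, mul_pow]
    linear_combination X ^ m * v ^ (k + 1) * d⁄dX R (X * u) * huvm
  rw [hcancel, coeff_X_pow_mul', if_pos hmn, Nat.add_sub_cancel_left,
    coeff_inv_pow_mul_derivative_X_mul huv]
  simp

theorem lagrange_inversion [IsAddTorsionFree R] (huv : u * v = 1) {ψ : R⟦X⟧}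
    (hψ : ψ.subst (X * u) = X) (n : ℕ) :
    coeff n (v ^ (n + 1)) = (n + 1) * coeff (n + 1) ψ := by
  have hXu : constantCoeff (X * u) = 0 := by simp
  have hchain : (d⁄dX R ψ).subst (X * u) * d⁄dX R (X * u) = 1 := by
    rw [← derivative_subst (HasSubst.of_constantCoeff_zero' hXu), hψ, derivative_X]
  calc coeff n (v ^ (n + 1))
      = coeff n ((d⁄dX R ψ).subst (X * u) * (d⁄dX R (X * u) * v ^ (n + 1))) := by
        rw [← mul_assoc, hchain, one_mul]
    _ = ∑ m ∈ range (n + 1),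
          coeff m (d⁄dX R ψ) * coeff n ((X * u) ^ m * (d⁄dX R (X * u) * v ^ (n + 1))) :=
        coeff_subst_mul hXu _ n
    _ = coeff n (d⁄dX R ψ) := by
        rw [sum_eq_single_of_mem n (self_mem_range_succ n) fun m hm hmn => ?_,
          coeff_X_mul_pow_mul_derivative_mul_inv_pow huv le_rfl, if_pos rfl, mul_one]
        rw [coeff_X_mul_pow_mul_derivative_mul_inv_pow huv (mem_range_succ_iff.mp hm),
          if_neg hmn, mul_zero]
    _ = (n + 1) * coeff (n + 1) ψ := by
        rw [coeff_derivative, mul_comm]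

theorem factorial_mul_sum_choose_mul_coeff_pow {x : ℕ → R} {F : R⟦X⟧}
    (hF : constantCoeff F = 0) (hx : ∀ j, x (j + 1) = (j + 1).factorial * coeff (j + 1) F)
    {n : ℕ} (hn : 1 ≤ n) :
    n.factorial * ∑ k ∈ range (n + 1), ((n + k).choose n : R) * coeff n (F ^ k)
      = ∑ k ∈ Icc 1 n, (((n + k).factorial / n.factorial : ℕ) : R) * bellPoly x n k := by
  rw [mul_sum, range_eq_Ico, sum_eq_sum_Ico_succ_bot n.succ_pos, pow_zero, coeff_one,
    if_neg (by omega), mul_zero, mul_zero, zero_add, zero_add, Nat.succ_eq_add_one,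
    Ico_add_one_right_eq_Icc]
  refine sum_congr rfl fun k _ => ?_
  rw [← Nat.add_choose_mul_factorial_eq_factorial_div, Nat.cast_mul, mul_assoc,
    factorial_mul_bellPoly hF hx]
  ring

end

theorem inverse_diffeo_coefficients_general {R : Type*} [CommRing R] [Algebra ℚ R]
    (a b : ℕ → R) (ha0 : a 0 = 1) (φ ψ : PowerSeries R)
    (hφ : ∀ n, coeff n φ = if n = 0 then 0 else a (n - 1))
    (hinv' : compPS ψ φ = X)
    (hb : ∀ n, 1 ≤ n → coeff n ψ = (n.factorial : ℚ)⁻¹ • b n) :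
    b 1 = 1 ∧ ∀ n, 1 ≤ n →
      b (n + 1) = ∑ k ∈ Finset.Icc 1 n, (((n + k).factorial / n.factorial : ℕ) : R)
        * bellPoly (fun j => -((j.factorial : R) * a j)) n k := by
  have := IsAddTorsionFree.of_module_rat R
  set u : R⟦X⟧ := mk a
  have hu : constantCoeff u = 1 := by simp [u, ha0]
  have hφu : φ = X * u := by
    ext (_ | n) <;> simp [hφ, u, coeff_succ_X_mul]
  obtain ⟨v, huv⟩ : ∃ v, u * v = 1 := ⟨invOfUnit u 1, mul_invOfUnit u 1 (by simp [hu])⟩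
  have hψ : ψ.subst (X * u) = X := by
    rw [← compPS_eq_subst ψ (by simp), ← hφu, hinv']
  have hb_eq : ∀ n, b (n + 1) = n.factorial * coeff n (v ^ (n + 1)) := fun n => by
    have hfact : ((n + 1).factorial : R) * algebraMap ℚ R ((n + 1).factorial : ℚ)⁻¹ = 1 := by
      rw [← map_natCast (algebraMap ℚ R), ← map_mul, mul_inv_cancel₀ (by positivity),
        map_one]
    rw [lagrange_inversion huv hψ, hb (n + 1) n.succ_pos, Algebra.smul_def]
    push_cast [Nat.factorial_succ] at hfact ⊢
    linear_combination -b (n + 1) * hfact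
  refine ⟨?_, fun n hn => ?_⟩
  · have hv : constantCoeff v = 1 := by simpa [hu] using congrArg constantCoeff huv
    simpa [hv] using hb_eq 0
  · rw [hb_eq, coeff_inv_pow_succ huv hu]
    exact factorial_mul_sum_choose_mul_coeff_pow (by simp [hu]) (fun j => by simp [u]) hn

/-- if `φ(ρ) = ∑_(j≥0) a_j ρ^(j+1)` with `a₀ = 1` and the compositional
inverse is `ρ(φ) = ∑_(n≥1) (b_n/n!) φ^n`, then `b₁ = 1` and
`b_(n+1) = ∑_(k=1)^n ((n+k)!/n!) B_n,k (-1!·a₁, …, -n!·aₙ)` for all `n ≥ 1`. -/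
theorem inverse_diffeo_coefficients {R : Type*} [CommRing R] [Algebra ℚ R]
    (a b : ℕ → R) (ha0 : a 0 = 1) (φ ψ : PowerSeries R)
    (hφ : ∀ n, coeff n φ = if n = 0 then 0 else a (n - 1))
    (hψ0 : constantCoeff ψ = 0)
    (hinv : compPS φ ψ = X) (hinv' : compPS ψ φ = X)
    (hb : ∀ n, 1 ≤ n → coeff n ψ = (n.factorial : ℚ)⁻¹ • b n) :
    b 1 = 1 ∧ ∀ n, 1 ≤ n →
      b (n + 1) = ∑ k ∈ Finset.Icc 1 n, (((n + k).factorial / n.factorial : ℕ) : R)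
        * bellPoly (fun j => -((j.factorial : R) * a j)) n k :=
  inverse_diffeo_coefficients_general a b ha0 φ ψ hφ hinv' hb
end

section
/- For fixed integers a ≥ 0 and b ≥ 1, the Fuss-Catalan numbers F_m(a,b) = (b/(ma+b)) · C(ma+b, m) satisfy: the generating function C_{a,b}(t) = ∑_{m≥0} F_m(a,b) t^m obeys the functional equation C_{a,b}(t) = (t · C_{a,b}(t)^{a/b} + 1)^b; in particular for b = 1, C_{a,1}(t) = t · C_{a,1}(t)^a + 1. -/
/-!
The map `f ↦ X * f ^ a + 1` raises the `X`-adic order of differences, so the limit of its iterates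
is a power series `D` with `D = X * D ^ a + 1`. Then `D ^ (b + 1) = D ^ b + X * D ^ (b + a)`, so the
coefficients `c m b` of `D ^ b` obey `c (m + 1) (b + 1) = c (m + 1) b + c m (b + a)`. With
`N = (m + 1) * a + b`, the Fuss-Catalan numbers satisfy the same recurrence, because
`b * (N - m) + (b + a) * (m + 1) = (b + 1) * N`; they also share the initial values
`c 0 b = 1` and `c (m + 1) 0 = 0`, so `D ^ b` is the generating function of `F_m(a, b)`.
-/

open Finset PowerSeries

noncomputable def fussCatalan (m a b : ℕ) : ℚ :=
  (b : ℚ) / (m * a + b) * ((m * a + b).choose m : ℚ)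

theorem Nat.cast_choose_succ_right_eq {K : Type*} [Ring K] (n k : ℕ) :
    (n.choose (k + 1) : K) * (k + 1) = n.choose k * (n - k) := by
  rcases le_or_gt k n with hkn | hnk
  · have h := congrArg (Nat.cast : ℕ → K) (Nat.choose_succ_right_eq n k)
    push_cast [Nat.cast_sub hkn] at h
    exact h
  · simp [Nat.choose_eq_zero_of_lt hnk, Nat.choose_eq_zero_of_lt (Nat.lt_succ_of_lt hnk)]

theorem fussCatalan_zero_left (a : ℕ) {b : ℕ} (hb : b ≠ 0) : fussCatalan 0 a b = 1 := by
  simp [fussCatalan, hb]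

theorem fussCatalan_zero_right (m a : ℕ) : fussCatalan m a 0 = 0 := by
  simp [fussCatalan]

theorem fussCatalan_succ_succ {m a b : ℕ} (hab : a + b ≠ 0) :
    fussCatalan (m + 1) a (b + 1) = fussCatalan (m + 1) a b + fussCatalan m a (b + a) := by
  obtain ⟨N, hN⟩ : ∃ N, (m + 1) * a + b = N := ⟨_, rfl⟩
  have hNq : (N : ℚ) = (m + 1) * a + b := by exact_mod_cast hN.symm
  have hN0 : (N : ℚ) ≠ 0 := by
    have : a ≤ (m + 1) * a := Nat.le_mul_of_pos_left a m.succ_pos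
    exact_mod_cast (by omega : N ≠ 0)
  have hC : (N.choose (m + 1) : ℚ) = N.choose m * (N - m) / (m + 1) := by
    rw [eq_div_iff (by positivity), Nat.cast_choose_succ_right_eq]
  have hC' : ((N + 1).choose (m + 1) : ℚ) = (N + 1) * N.choose m / (m + 1) := by
    rw [eq_div_iff (by positivity)]
    exact_mod_cast (Nat.add_one_mul_choose_eq N m).symm
  simp only [fussCatalan, ← Nat.cast_mul, ← Nat.cast_add]
  rw [show (m + 1) * a + (b + 1) = N + 1 by omega, show m * a + (b + a) = N by grind, hN]
  push_cast
  rw [hC, hC']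
  field_simp
  linear_combination (N.choose m : ℚ) * hNq

namespace PowerSeries

section CommRing

variable {R : Type*} [CommRing R]

theorem exists_fixedPoint_of_X_pow_dvd_sub {Φ : R⟦X⟧ → R⟦X⟧}
    (hΦ : ∀ n f g, X ^ n ∣ f - g → X ^ (n + 1) ∣ Φ f - Φ g) : ∃ D, Φ D = D := by
  set u : ℕ → R⟦X⟧ := fun n => Φ^[n] 0
  have hu : ∀ n, u (n + 1) = Φ (u n) := fun n => Function.iterate_succ_apply' Φ n 0
  have hsucc : ∀ n, X ^ n ∣ u (n + 1) - u n := by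
    intro n
    induction n with
    | zero => exact one_dvd _
    | succ n ih => simpa only [hu] using hΦ n _ _ ih
  have cauchy : ∀ n k, X ^ n ∣ u (n + k) - u n := by
    intro n k
    induction k with
    | zero => simp
    | succ k ih =>
      rw [← add_assoc, ← sub_add_sub_cancel _ (u (n + k))]
      exact dvd_add ((pow_dvd_pow X (Nat.le_add_right n k)).trans (hsucc _)) ih
  set D := mk fun n => coeff n (u (n + 1))
  have approx : ∀ n, X ^ n ∣ D - u n := by
    refine fun n => X_pow_dvd_iff.2 fun k hk => ?_
    obtain ⟨j, rfl⟩ := Nat.exists_eq_add_of_le (hk : k + 1 ≤ n)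
    have := X_pow_dvd_iff.1 (cauchy (k + 1) j) k (Nat.lt_succ_self k)
    rw [map_sub, sub_eq_zero] at this
    rw [map_sub, coeff_mk, ← this, sub_self]
  refine ⟨D, sub_eq_zero.1 (ext fun n => ?_)⟩
  have hn : X ^ (n + 1) ∣ Φ D - D := by
    rw [← sub_add_sub_cancel _ (Φ (u n))]
    exact dvd_add (hΦ n _ _ (approx n)) (dvd_sub_comm.1 (hu n ▸ approx (n + 1)))
  simpa using X_pow_dvd_iff.1 hn n (Nat.lt_succ_self n)

theorem exists_eq_X_mul_pow_add_one (a : ℕ) : ∃ D : R⟦X⟧, X * D ^ a + 1 = D :=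
  exists_fixedPoint_of_X_pow_dvd_sub fun n f g hfg => by
    rw [add_sub_add_right_eq_sub, ← mul_sub, pow_succ']
    exact mul_dvd_mul_left X (hfg.trans (sub_dvd_pow_sub_pow f g a))

end CommRing

section CommSemiring

variable {R : Type*} [CommSemiring R]

theorem constantCoeff_of_eq_X_mul_pow_add_one {a : ℕ} {D : R⟦X⟧} (hD : X * D ^ a + 1 = D) :
    constantCoeff D = 1 := by
  rw [← hD]; simp

theorem coeff_succ_pow_succ_of_eq_X_mul_pow_add_one {a : ℕ} {D : R⟦X⟧}
    (hD : X * D ^ a + 1 = D) (m b : ℕ) :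
    coeff (m + 1) (D ^ (b + 1)) = coeff (m + 1) (D ^ b) + coeff m (D ^ (b + a)) := by
  have hpow : D ^ (b + 1) = X * D ^ (b + a) + D ^ b := by
    calc D ^ (b + 1) = D ^ b * (X * D ^ a + 1) := by rw [pow_succ, hD]
      _ = X * D ^ (b + a) + D ^ b := by ring
  rw [hpow, map_add, coeff_succ_X_mul, add_comm]

end CommSemiring

end PowerSeries

theorem coeff_pow_eq_fussCatalan {a : ℕ} {D : ℚ⟦X⟧} (hD : X * D ^ a + 1 = D) (m : ℕ)
    {b : ℕ} (hb : b ≠ 0) : coeff m (D ^ b) = fussCatalan m a b := by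
  induction m generalizing b with
  | zero =>
    rw [coeff_zero_eq_constantCoeff_apply, map_pow, constantCoeff_of_eq_X_mul_pow_add_one hD,
      one_pow, fussCatalan_zero_left a hb]
  | succ m ih =>
    clear hb
    induction b with
    | zero => simp [coeff_one, fussCatalan_zero_right]
    | succ b ihb =>
      rw [coeff_succ_pow_succ_of_eq_X_mul_pow_add_one hD, ihb]
      rcases eq_or_ne (a + b) 0 with hab | hab
      · -- `fussCatalan 0 0 0 = 0` is not `coeff 0 1`, so the recurrence fails here
        obtain ⟨rfl, rfl⟩ : a = 0 ∧ b = 0 := by omega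
        cases m <;> simp [fussCatalan, coeff_one, Nat.choose_eq_zero_of_lt]
      · rw [ih (by omega), fussCatalan_succ_succ hab]

/-- the generating function `C_(a,b)(t) = ∑_(m≥0) F_m(a,b) t^m` of the
Fuss-Catalan numbers satisfies `C_(a,b) = (t · C_(a,b)^(a/b) + 1)^b`; the fractional
power `C_(a,b)^(1/b)` is expressed via the (unique) power series `D` with constant
term 1 and `D^b = C_(a,b)`, so that `C_(a,b)^(a/b) = D^a`. In particular, for `b = 1`,
`C_(a,1)(t) = t · C_(a,1)(t)^a + 1`. -/
theorem fussCatalan_generating_function (a b : ℕ) (hb : 1 ≤ b) :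
    (∃ D : PowerSeries ℚ, constantCoeff D = 1 ∧
        D ^ b = PowerSeries.mk (fun m => fussCatalan m a b) ∧
        PowerSeries.mk (fun m => fussCatalan m a b) = (X * D ^ a + 1) ^ b) ∧
    PowerSeries.mk (fun m => fussCatalan m a 1)
      = X * (PowerSeries.mk (fun m => fussCatalan m a 1)) ^ a + 1 := by
  obtain ⟨D, hD⟩ := exists_eq_X_mul_pow_add_one (R := ℚ) a
  have hpow : ∀ {c : ℕ}, c ≠ 0 → D ^ c = mk fun m => fussCatalan m a c := fun hc =>
    ext fun m => by rw [coeff_mk, coeff_pow_eq_fussCatalan hD m hc]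
  have hD1 : mk (fun m => fussCatalan m a 1) = D := by rw [← hpow one_ne_zero, pow_one]
  refine ⟨⟨D, constantCoeff_of_eq_X_mul_pow_add_one hD, hpow (by omega), ?_⟩,
    by rw [hD1, hD]⟩
  rw [← hpow (by omega), hD]
end

section
/- Fuss-Catalan recursion: the numbers F_m(a, 1) = (1/(ma+1))·binom(ma+1, m) satisfy F_0(a,1) = 1 and F_{m+1}(a,1) = ∑_{k_1 + k_2 + ... + k_a = m} F_{k_1}(a,1)·F_{k_2}(a,1)···F_{k_a}(a,1) for all m ≥ 0 and integers a ≥ 1. -/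
open Finset

/-- The Fuss-Catalan numbers `F_m(a, 1) = (1/(m a + 1)) * C(m a + 1, m)`. -/
noncomputable def fussCatalan1 (m a : ℕ) : ℚ :=
  (1 / (m * a + 1) : ℚ) * ((m * a + 1).choose m : ℚ)

namespace FussAux

/-- Generalized Fuss–Catalan numbers `A a k x = (x/(x+ka)) * C(x+ka, k)`,
written subtraction-free. -/
noncomputable def A (a : ℕ) : ℕ → ℕ → ℚ
  | 0, _ => 1
  | (k+1), x => (((x + (k+1)*a).choose (k+1) : ℕ) : ℚ)
      - (a : ℚ) * (((x + k*a + (a-1)).choose k : ℕ) : ℚ)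

lemma A_zero (a x : ℕ) : A a 0 x = 1 := rfl

lemma A_succ (a k x : ℕ) : A a (k+1) x = (((x + (k+1)*a).choose (k+1) : ℕ) : ℚ)
      - (a : ℚ) * (((x + k*a + (a-1)).choose k : ℕ) : ℚ) := rfl

lemma A_succ_x0 {a : ℕ} (ha : 1 ≤ a) (k : ℕ) : A a (k+1) 0 = 0 := by
  obtain ⟨c, rfl⟩ : ∃ c, a = c + 1 := ⟨a - 1, (Nat.succ_pred_eq_of_pos ha).symm⟩
  have e1 : k*(c+1)+c+1 = (k+1)*(c+1) := by ring
  have h : ((k+1)*(c+1)) * ((k*(c+1)+c).choose k)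
      = ((k+1)*(c+1)).choose (k+1) * (k+1) := by
    rw [← e1]; exact Nat.add_one_mul_choose_eq (k*(c+1)+c) k
  have hq : ((k:ℚ)+1) * ((c:ℚ)+1) * (((k*(c+1)+c).choose k : ℕ) : ℚ)
      = ((((k+1)*(c+1)).choose (k+1) : ℕ) : ℚ) * ((k:ℚ)+1) := by
    exact_mod_cast congrArg (Nat.cast (R := ℚ)) h
  have hk : ((k:ℚ)+1) ≠ 0 := by positivity
  have hX : ((c:ℚ)+1) * (((k*(c+1)+c).choose k : ℕ) : ℚ)
      = ((((k+1)*(c+1)).choose (k+1) : ℕ) : ℚ) := by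
    apply mul_right_cancel₀ hk; linear_combination hq
  rw [A_succ]
  simp only [Nat.zero_add, Nat.add_sub_cancel]
  push_cast at hX ⊢
  linear_combination -hX

lemma A_step {a : ℕ} (ha : 1 ≤ a) (k x : ℕ) :
    A a (k+1) (x+1) = A a (k+1) x + A a k (x + a) := by
  obtain ⟨c, rfl⟩ : ∃ c, a = c + 1 := ⟨a - 1, (Nat.succ_pred_eq_of_pos ha).symm⟩
  cases k with
  | zero =>
      rw [A_succ, A_succ, A_zero]
      have ea : x + 1 + 1*(c+1) = (x + c + 1) + 1 := by ring
      have eb : x + 1*(c+1) = x + c + 1 := by ring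
      rw [ea, eb, Nat.choose_one_right, Nat.choose_one_right]
      simp only [Nat.choose_zero_right]
      push_cast
      ring
  | succ j =>
      simp only [A_succ, Nat.add_sub_cancel]
      have p1 : (x + 1 + (j+2) * (c+1)).choose (j+2)
          = (x + (j+2)*(c+1)).choose (j+1) + (x + (j+2)*(c+1)).choose (j+2) := by
        have e : x + 1 + (j+2)*(c+1) = (x + (j+2)*(c+1)) + 1 := by ring
        rw [e]
        exact Nat.choose_succ_succ' (x + (j+2)*(c+1)) (j+1)
      have e2 : x + 1 + (j+1)*(c+1) + c = x + (j+2)*(c+1) := by ring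
      have e3 : x + (c+1) + (j+1)*(c+1) = x + (j+2)*(c+1) := by ring
      have e4 : x + (c+1) + j*(c+1) + c = x + (j+1)*(c+1) + c := by ring
      have p2 : (x + (j+2)*(c+1)).choose (j+1)
          = (x + (j+1)*(c+1) + c).choose j + (x + (j+1)*(c+1) + c).choose (j+1) := by
        have e : x + (j+2)*(c+1) = (x + (j+1)*(c+1) + c) + 1 := by ring
        rw [e]
        exact Nat.choose_succ_succ' (x + (j+1)*(c+1) + c) j
      rw [e2, e3, e4, p1, p2]
      push_cast
      ring

lemma V {a : ℕ} (ha : 1 ≤ a) :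
    ∀ m x y : ℕ, (∑ k ∈ Finset.range (m+1),
        A a k x * (((y + (m-k)*a).choose (m-k) : ℕ) : ℚ))
      = (((x + y + m*a).choose m : ℕ) : ℚ) := by
  intro m
  induction m with
  | zero => intro x y; simp [A_zero]
  | succ n ih =>
      intro x y
      have expand : ∀ z : ℕ, (∑ k ∈ Finset.range (n+1+1),
          A a k z * (((y + (n+1-k)*a).choose (n+1-k) : ℕ) : ℚ))
          = (∑ jj ∈ Finset.range (n+1),
              A a (jj+1) z * (((y + (n-jj)*a).choose (n-jj) : ℕ) : ℚ))
            + A a 0 z * (((y + (n+1)*a).choose (n+1) : ℕ) : ℚ) := by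
        intro z
        rw [Finset.sum_range_succ']
        have hre : ∀ jj ∈ Finset.range (n+1),
            A a (jj+1) z * (((y + (n+1-(jj+1))*a).choose (n+1-(jj+1)) : ℕ) : ℚ)
            = A a (jj+1) z * (((y + (n-jj)*a).choose (n-jj) : ℕ) : ℚ) := by
          intro jj _
          have e : n + 1 - (jj+1) = n - jj := by omega
          rw [e]
        rw [Finset.sum_congr rfl hre]
        norm_num
      induction x with
      | zero =>
          rw [expand 0]
          have h0 : ∀ j ∈ Finset.range (n+1),
              A a (j+1) 0 * (((y + (n-j)*a).choose (n-j) : ℕ) : ℚ) = 0 := by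
            intro j _; rw [A_succ_x0 ha]; ring
          rw [Finset.sum_congr rfl h0]
          simp [A_zero]
      | succ x ihx =>
          rw [expand (x+1)]
          have hterm : ∀ jj ∈ Finset.range (n+1),
              A a (jj+1) (x+1) * (((y + (n-jj)*a).choose (n-jj) : ℕ) : ℚ)
              = A a (jj+1) x * (((y + (n-jj)*a).choose (n-jj) : ℕ) : ℚ)
                + A a jj (x+a) * (((y + (n-jj)*a).choose (n-jj) : ℕ) : ℚ) := by
            intro jj _
            rw [A_step ha, add_mul]
          rw [Finset.sum_congr rfl hterm, Finset.sum_add_distrib]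
          have hA0 : A a 0 (x+1) = A a 0 x := rfl
          rw [hA0]
          have hsum1 := (expand x).symm.trans ihx
          have hsum2 := ih (x+a) y
          have e5 : x + a + y + n*a = x + y + (n+1)*a := by ring
          rw [e5] at hsum2
          have epascal : (x + 1 + y + (n+1)*a).choose (n+1)
              = (x + y + (n+1)*a).choose n + (x + y + (n+1)*a).choose (n+1) := by
            have e : x + 1 + y + (n+1)*a = (x + y + (n+1)*a) + 1 := by ring
            rw [e]
            exact Nat.choose_succ_succ' (x + y + (n+1)*a) n
          rw [epascal]
          push_cast
          push_cast at hsum1 hsum2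
          linear_combination hsum1 + hsum2

lemma convA {a : ℕ} (ha : 1 ≤ a) (m j : ℕ) :
    (∑ k ∈ Finset.range (m+1), A a k 1 * A a (m-k) j) = A a m (j+1) := by
  cases m with
  | zero => simp [A_zero]
  | succ n =>
      rw [Finset.sum_range_succ, Nat.sub_self, A_zero, mul_one]
      have hterm : ∀ k ∈ Finset.range (n+1),
          A a k 1 * A a (n+1-k) j
          = A a k 1 * (((j + (n+1-k)*a).choose (n+1-k) : ℕ) : ℚ)
            - (a : ℚ) * (A a k 1 * (((j + (a-1) + (n-k)*a).choose (n-k) : ℕ) : ℚ)) := by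
        intro k hk
        have hkn : k ≤ n := by simpa [Nat.lt_succ_iff] using hk
        have e : n + 1 - k = (n - k) + 1 := by omega
        rw [e, A_succ]
        have e2 : j + (n-k)*a + (a-1) = j + (a-1) + (n-k)*a := by ring
        rw [e2]
        have e3 : (n-k) + 1 = n + 1 - k := by omega
        rw [e3]
        ring
      rw [Finset.sum_congr rfl hterm, Finset.sum_sub_distrib, ← Finset.mul_sum]
      have hV2 : (∑ k ∈ Finset.range (n+1),
          A a k 1 * (((j + (a-1) + (n-k)*a).choose (n-k) : ℕ) : ℚ))
          = (((1 + (j + (a-1)) + n*a).choose n : ℕ) : ℚ) := V ha n 1 (j + (a-1))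
      have hV1 : (∑ k ∈ Finset.range (n+1),
          A a k 1 * (((j + (n+1-k)*a).choose (n+1-k) : ℕ) : ℚ))
          + A a (n+1) 1 * (((j + (n+1-(n+1))*a).choose (n+1-(n+1)) : ℕ) : ℚ)
          = (((1 + j + (n+1)*a).choose (n+1) : ℕ) : ℚ) := by
        rw [← V ha (n+1) 1 j]
        conv_rhs => rw [Finset.sum_range_succ]
      rw [Nat.sub_self] at hV1
      simp only [Nat.zero_mul, Nat.add_zero, Nat.choose_zero_right, Nat.cast_one,
        mul_one] at hV1
      have e7 : 1 + (j + (a-1)) + n*a = j + (n+1)*a := by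
        have h1 : 1 + (a-1) = a := by omega
        calc 1 + (j + (a-1)) + n*a = j + (1 + (a-1)) + n*a := by ring
        _ = j + a + n*a := by rw [h1]
        _ = j + (n+1)*a := by ring
      rw [e7] at hV2
      rw [hV2]
      conv_rhs => rw [A_succ]
      have e8 : j + 1 + n*a + (a-1) = j + (n+1)*a := by
        have h1 : 1 + (a-1) = a := by omega
        calc j + 1 + n*a + (a-1) = j + (1 + (a-1)) + n*a := by ring
        _ = j + a + n*a := by rw [h1]
        _ = j + (n+1)*a := by ring
      have e9 : j + 1 + (n+1)*a = 1 + j + (n+1)*a := by ring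
      rw [e8, e9]
      linear_combination hV1

lemma F_eq_A_one {a : ℕ} (ha : 1 ≤ a) (m : ℕ) : fussCatalan1 m a = A a m 1 := by
  cases m with
  | zero => simp [fussCatalan1, A_zero]
  | succ j =>
      rw [A_succ]
      have e1 : 1 + j*a + (a-1) = (j+1)*a := by
        have h1 : 1 + (a-1) = a := by omega
        calc 1 + j*a + (a-1) = (1 + (a-1)) + j*a := by ring
        _ = a + j*a := by rw [h1]
        _ = (j+1)*a := by ring
      have e2 : 1 + (j+1)*a = (j+1)*a + 1 := by ring
      rw [e1, e2]
      have h : ((j+1)*a + 1) * (((j+1)*a).choose j)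
          = ((j+1)*a + 1).choose (j+1) * (j+1) := Nat.add_one_mul_choose_eq ((j+1)*a) j
      have hq : ((((j+1)*a : ℕ) : ℚ) + 1) * ((((j+1)*a).choose j : ℕ) : ℚ)
          = ((((j+1)*a + 1).choose (j+1) : ℕ) : ℚ) * ((j:ℚ)+1) := by
        exact_mod_cast congrArg (Nat.cast (R := ℚ)) h
      have hT : (((j+1 : ℕ) : ℚ) * (a : ℚ) + 1) ≠ 0 := by positivity
      unfold fussCatalan1
      rw [div_mul_eq_mul_div, div_eq_iff hT]
      push_cast
      push_cast at hq
      linear_combination (a : ℚ) * hq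

lemma F_succ_eq_A {a : ℕ} (ha : 1 ≤ a) (m : ℕ) : fussCatalan1 (m+1) a = A a m a := by
  obtain ⟨c, rfl⟩ : ∃ c, a = c + 1 := ⟨a - 1, (Nat.succ_pred_eq_of_pos ha).symm⟩
  cases m with
  | zero =>
      unfold fussCatalan1
      rw [A_zero]
      rw [Nat.one_mul, Nat.choose_one_right]
      push_cast
      have hT : ((c:ℚ)+1) + 1 ≠ 0 := by positivity
      field_simp
  | succ n =>
      unfold fussCatalan1
      conv_rhs => rw [A_succ]
      simp only [Nat.add_sub_cancel]
      have e1 : (c+1) + (n+1)*(c+1) = (n+2)*(c+1) := by ring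
      have e2 : (c+1) + n*(c+1) + c = (n+2)*(c+1) - 1 := by
        have h : (n+2)*(c+1) = (c+1) + n*(c+1) + c + 1 := by ring
        omega
      have e3 : (n+1+1) * (c+1) + 1 = (n+2)*(c+1) + 1 := by ring
      rw [e1, e2, e3]
      set N := (n+2)*(c+1) with hN
      have hN1 : 1 ≤ N := by
        have : 0 < (n+2)*(c+1) := by positivity
        omega
      have h1 : (N + 1) * (N.choose (n+1)) = (N+1).choose (n+2) * (n+2) :=
        Nat.add_one_mul_choose_eq N (n+1)
      have h2 : N * ((N-1).choose n) = N.choose (n+1) * (n+1) := by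
        have h := Nat.add_one_mul_choose_eq (N-1) n
        have hN2 : N - 1 + 1 = N := by omega
        calc N * ((N-1).choose n) = (N-1+1) * ((N-1).choose n) := by rw [hN2]
        _ = (N-1+1).choose (n+1) * (n+1) := h
        _ = N.choose (n+1) * (n+1) := by rw [hN2]
      have hq1 : ((N:ℚ) + 1) * ((N.choose (n+1) : ℕ) : ℚ)
          = (((N+1).choose (n+2) : ℕ) : ℚ) * ((n:ℚ)+2) := by
        exact_mod_cast congrArg (Nat.cast (R := ℚ)) h1
      have hq2 : (N:ℚ) * (((N-1).choose n : ℕ) : ℚ)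
          = ((N.choose (n+1) : ℕ) : ℚ) * ((n:ℚ)+1) := by
        exact_mod_cast congrArg (Nat.cast (R := ℚ)) h2
      have hNQ : (N:ℚ) = ((n:ℚ)+2) * ((c:ℚ)+1) := by rw [hN]; push_cast; ring
      set X : ℚ := (((N+1).choose (n+2) : ℕ) : ℚ) with hX
      set Y : ℚ := ((N.choose (n+1) : ℕ) : ℚ) with hY
      set Z : ℚ := (((N-1).choose n : ℕ) : ℚ) with hZ
      have h3 : ((n:ℚ)+2) * (((c:ℚ)+1) * Z) = ((n:ℚ)+1) * Y := by
        linear_combination hq2 - Z * hNQ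
      have h4 : (((n:ℚ)+2) * ((c:ℚ)+1) + 1) * Y = X * ((n:ℚ)+2) := by
        linear_combination hq1 - Y * hNQ
      have hT : (((n+1+1 : ℕ) : ℚ) * ((c+1 : ℕ) : ℚ) + 1) ≠ 0 := by positivity
      rw [div_mul_eq_mul_div, div_eq_iff hT]
      push_cast
      have hn2 : ((n:ℚ)+2) ≠ 0 := by positivity
      apply mul_right_cancel₀ hn2
      linear_combination (((n:ℚ)+2) * ((c:ℚ)+1) + 1) * h3 - h4

lemma sum_adT_succ (j m : ℕ) (f : (Fin (j+1) → ℕ) → ℚ) :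
    (∑ t ∈ Finset.Nat.antidiagonalTuple (j+1) m, f t)
      = ∑ p ∈ Finset.HasAntidiagonal.antidiagonal m,
          ∑ t ∈ Finset.Nat.antidiagonalTuple j p.2, f (Fin.cons p.1 t) := by
  rw [Finset.sum_sigma']
  apply Finset.sum_bij'
    (i := fun t (_ : t ∈ Finset.Nat.antidiagonalTuple (j+1) m) =>
      (⟨(t 0, m - t 0), Fin.tail t⟩ :
        Σ _p : ℕ × ℕ, (Fin j → ℕ)))
    (j := fun σ _ => Fin.cons σ.1.1 σ.2)
  · intro t ht
    rw [Finset.Nat.mem_antidiagonalTuple] at ht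
    have hsum : t 0 + ∑ i : Fin j, t i.succ = m := by
      rw [← Fin.sum_univ_succ]; exact ht
    rw [Finset.mem_sigma]
    constructor
    · rw [Finset.HasAntidiagonal.mem_antidiagonal]
      show t 0 + (m - t 0) = m
      omega
    · rw [Finset.Nat.mem_antidiagonalTuple]
      show (∑ i : Fin j, t i.succ) = m - t 0
      omega
  · intro σ hσ
    rw [Finset.mem_sigma] at hσ
    obtain ⟨h1, h2⟩ := hσ
    rw [Finset.HasAntidiagonal.mem_antidiagonal] at h1
    rw [Finset.Nat.mem_antidiagonalTuple] at h2 ⊢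
    rw [Fin.sum_cons, h2, h1]
  · intro t ht
    exact Fin.cons_self_tail t
  · intro σ hσ
    rw [Finset.mem_sigma] at hσ
    obtain ⟨h1, h2⟩ := hσ
    rw [Finset.HasAntidiagonal.mem_antidiagonal] at h1
    obtain ⟨⟨k, l⟩, u⟩ := σ
    simp only at h1
    simp only [Fin.cons_zero, Fin.tail_cons]
    have hml : m - k = l := by omega
    rw [hml]
  · intro t ht
    rw [Fin.cons_self_tail]

lemma sum_tuples {a : ℕ} (ha : 1 ≤ a) :
    ∀ j m : ℕ, (∑ t ∈ Finset.Nat.antidiagonalTuple j m,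
        ∏ i, fussCatalan1 (t i) a) = A a m j := by
  intro j
  induction j with
  | zero =>
      intro m
      cases m with
      | zero =>
          rw [Finset.Nat.antidiagonalTuple_zero_zero]
          simp [A_zero]
      | succ k =>
          rw [Finset.Nat.antidiagonalTuple_zero_succ]
          simp [A_succ_x0 ha]
  | succ j ihj =>
      intro m
      rw [sum_adT_succ j m (fun t => ∏ i, fussCatalan1 (t i) a)]
      have h1 : ∀ p ∈ Finset.HasAntidiagonal.antidiagonal m,
          (∑ t ∈ Finset.Nat.antidiagonalTuple j p.2,
            ∏ i : Fin (j+1), fussCatalan1 ((Fin.cons p.1 t : Fin (j+1) → ℕ) i) a)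
          = A a p.1 1 * A a p.2 j := by
        intro p _
        have hprod : ∀ t : Fin j → ℕ,
            (∏ i : Fin (j+1), fussCatalan1 ((Fin.cons p.1 t : Fin (j+1) → ℕ) i) a)
            = fussCatalan1 p.1 a * ∏ i, fussCatalan1 (t i) a := by
          intro t
          rw [Fin.prod_univ_succ]
          simp only [Fin.cons_zero, Fin.cons_succ]
        rw [Finset.sum_congr rfl fun t _ => hprod t, ← Finset.mul_sum, ihj p.2,
          F_eq_A_one ha]
      rw [Finset.sum_congr rfl h1, Finset.Nat.sum_antidiagonal_eq_sum_range_succ_mk]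
      exact convA ha m j

end FussAux

/-- Fuss-Catalan recursion: `F₀(a,1) = 1` and
`F_(m+1)(a,1) = ∑_(k₁+⋯+k_a = m) F_(k₁)(a,1) ⋯ F_(k_a)(a,1)` for `m ≥ 0`, `a ≥ 1`. -/
theorem fussCatalan_recursion (a : ℕ) (ha : 1 ≤ a) :
    fussCatalan1 0 a = 1 ∧
    ∀ m : ℕ, fussCatalan1 (m + 1) a
      = ∑ t ∈ Finset.Nat.antidiagonalTuple a m, ∏ i : Fin a, fussCatalan1 (t i) a := by
  constructor
  · simp [fussCatalan1]
  · intro m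
    rw [FussAux.sum_tuples ha a m]
    exact FussAux.F_succ_eq_A ha m
end
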